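/- Under the hypotheses of the convex BTARD-SGD analysis — f L-smooth and convex with minimizer x*, R₀ ≥ ‖x⁰ − x*‖, 0 < γ ≤ 1/(4L), per-step conditional bounds E[ḡ^k | F_k] = ∇f(x^k), E[‖ĝ^k − ḡ^k‖² | F_k] ≤ C·δ̂_k·σ², E[‖ĝ^k‖² | F_k] ≤ 2C·δ̂_k·σ² + 2‖∇f(x^k)‖² + 2σ²/N, x^{k+1} = x^k − γ·ĝ^k, and the stepsize conditions 2γ²σ²K/N ≤ R₀²/3, 2√2·γ·√C·σ·R₀·∑_{k<K}√(E[δ̂_k]) ≤ R₀²/3, 2γ²·C·σ²·∑_{k<K}E[δ̂_k] ≤ R₀²/3 — the iterates remain bounded in expectation: E[‖x^k − x*‖²] ≤ 2R₀² for every k = 0, 1, …, K. -/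

import Mathlib

/-!
Write `y = x^k - x*` and `D_k = E‖y‖²`. In the expansion of `E‖y - γ ĝ^k‖²`, split
`ĝ^k = (ĝ^k - ḡ^k) + ḡ^k`: since `y` is `F_k`-measurable, the unbiased part contributes exactly
`E⟪y, ∇f(x^k)⟫`, while the Byzantine bias costs at most `√(E‖y‖²) · √(C σ² E δ̂_k)` by
Cauchy–Schwarz. For convex `L`-smooth `f`, `‖∇f(x)‖² ≤ 2L⟪∇f(x), x - x*⟫`, so with `γ ≤ 1/(4L)` the
gradient part of `γ² E‖ĝ^k‖²` is absorbed by `2γ E⟪y, ∇f(x^k)⟫`. Hence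
`D_{k+1} ≤ D_k + b_k √D_k + c_k` with `b_k = 2γ √C σ √(E δ̂_k)` and
`c_k = 2γ² C σ² E δ̂_k + 2γ² σ² / N`. While `D_j ≤ 2R₀²` we have `√D_j ≤ √2 R₀`, so by
induction `D_k` stays below `R₀² + ∑_{j<k} (√2 R₀ b_j + c_j)`, which the stepsize conditions bound by `2R₀²`.
-/

open MeasureTheory
open scoped InnerProductSpace

section SmoothConvex

variable {E : Type*} [NormedAddCommGroup E] [InnerProductSpace ℝ E] [CompleteSpace E]
  {f : E → ℝ} {L : ℝ}

theorem hasDerivAt_comp_add_smul {a v : E} {t : ℝ} (hf : DifferentiableAt ℝ f (a + t • v)) :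
    HasDerivAt (fun s : ℝ => f (a + s • v)) ⟪gradient f (a + t • v), v⟫_ℝ t := by
  have hline : HasDerivAt (fun s : ℝ => a + s • v) v t := by
    simpa using ((hasDerivAt_id t).smul_const v).const_add a
  simpa [Function.comp_def] using
    (hasGradientAt_iff_hasFDerivAt.mp hf.hasGradientAt).comp_hasDerivAt t hline

theorem ConvexOn.add_inner_gradient_le (hconv : ConvexOn ℝ Set.univ f) {a : E}
    (hf : DifferentiableAt ℝ f a) (b : E) : f a + ⟪gradient f a, b - a⟫_ℝ ≤ f b := by
  have hline : ConvexOn ℝ Set.univ (fun t : ℝ => f (a + t • (b - a))) := by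
    simpa [Function.comp_def, AffineMap.lineMap_apply_module', add_comm] using
      hconv.comp_affineMap (AffineMap.lineMap a b)
  have hderiv : HasDerivAt (fun t : ℝ => f (a + t • (b - a))) ⟪gradient f a, b - a⟫_ℝ 0 := by
    simpa using hasDerivAt_comp_add_smul (v := b - a) (t := 0) (by simpa using hf)
  have hslope := hline.le_slope_of_hasDerivAt (Set.mem_univ 0) (Set.mem_univ 1) one_pos hderiv
  rw [slope_def_field] at hslope
  simp only [one_smul, zero_smul, add_zero, add_sub_cancel, sub_zero, div_one] at hslope
  linarith

theorem continuous_gradient_of_lipschitz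
    (hsmooth : ∀ y z, ‖gradient f y - gradient f z‖ ≤ L * ‖y - z‖) :
    Continuous (gradient f) :=
  (LipschitzWith.of_dist_le' (K := L) fun y z => by
    simpa only [dist_eq_norm] using hsmooth y z).continuous

theorem apply_add_le_of_lipschitz_gradient (hf : Differentiable ℝ f)
    (hsmooth : ∀ y z, ‖gradient f y - gradient f z‖ ≤ L * ‖y - z‖) (a v : E) :
    f (a + v) ≤ f a + ⟪gradient f a, v⟫_ℝ + L / 2 * ‖v‖ ^ 2 := by
  set ψ : ℝ → ℝ := fun t => f (a + t • v) - t * ⟪gradient f a, v⟫_ℝ - L / 2 * t ^ 2 * ‖v‖ ^ 2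
  have hψ : ∀ t, HasDerivAt ψ (⟪gradient f (a + t • v), v⟫_ℝ - ⟪gradient f a, v⟫_ℝ
      - L * t * ‖v‖ ^ 2) t := fun t => by
    refine (((hasDerivAt_comp_add_smul (hf _)).sub
      ((hasDerivAt_id t).mul_const ⟪gradient f a, v⟫_ℝ)).sub
      (((hasDerivAt_pow 2 t).const_mul (L / 2)).mul_const (‖v‖ ^ 2))).congr_deriv ?_
    simp only [one_mul, Nat.cast_ofNat, Nat.add_one_sub_one, pow_one]
    ring
  have hanti : AntitoneOn ψ (Set.Ici 0) := by
    refine antitoneOn_of_hasDerivWithinAt_nonpos (convex_Ici 0)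
      (HasDerivAt.continuousOn fun t _ => hψ t) (fun t _ => (hψ t).hasDerivWithinAt)
      fun t ht => ?_
    rw [interior_Ici, Set.mem_Ioi] at ht
    have hlip : ⟪gradient f (a + t • v) - gradient f a, v⟫_ℝ ≤ L * t * ‖v‖ ^ 2 :=
      calc _ ≤ ‖gradient f (a + t • v) - gradient f a‖ * ‖v‖ := real_inner_le_norm _ _
        _ ≤ L * ‖t • v‖ * ‖v‖ := by
          gcongr
          simpa using hsmooth (a + t • v) a
        _ = L * t * ‖v‖ ^ 2 := by rw [norm_smul, Real.norm_of_nonneg ht.le]; ring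
    rw [inner_sub_left] at hlip
    linarith
  have := hanti Set.self_mem_Ici (Set.mem_Ici.mpr zero_le_one) zero_le_one
  simp only [ψ, one_smul, zero_smul, add_zero, one_mul, zero_mul, one_pow, sub_zero,
    mul_one, mul_zero, ne_eq, OfNat.ofNat_ne_zero, not_false_eq_true, zero_pow] at this
  linarith

theorem sq_norm_gradient_le_of_forall_le (hL : 0 < L) (hf : Differentiable ℝ f)
    (hsmooth : ∀ y z, ‖gradient f y - gradient f z‖ ≤ L * ‖y - z‖) {xstar : E}
    (hmin : ∀ y, f xstar ≤ f y) (a : E) :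
    ‖gradient f a‖ ^ 2 ≤ 2 * L * (f a - f xstar) := by
  have hstep := apply_add_le_of_lipschitz_gradient hf hsmooth a (-L⁻¹ • gradient f a)
  rw [inner_smul_right, real_inner_self_eq_norm_sq, norm_smul, mul_pow, norm_neg,
    Real.norm_of_nonneg (inv_nonneg.mpr hL.le)] at hstep
  have := (hmin _).trans hstep
  field_simp at this ⊢
  nlinarith

theorem ConvexOn.sq_norm_gradient_le_inner (hconv : ConvexOn ℝ Set.univ f) (hL : 0 < L)
    (hf : Differentiable ℝ f)
    (hsmooth : ∀ y z, ‖gradient f y - gradient f z‖ ≤ L * ‖y - z‖) {xstar : E}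
    (hmin : ∀ y, f xstar ≤ f y) (a : E) :
    ‖gradient f a‖ ^ 2 ≤ 2 * L * ⟪gradient f a, a - xstar⟫_ℝ := by
  have hfirst := hconv.add_inner_gradient_le (hf a) xstar
  rw [← neg_sub, inner_neg_right] at hfirst
  nlinarith [sq_norm_gradient_le_of_forall_le hL hf hsmooth hmin a]

end SmoothConvex

section Expectation

variable {Ω E : Type*} {m m0 : MeasurableSpace Ω} {P : Measure Ω} [NormedAddCommGroup E]

theorem MeasureTheory.MemLp.integrable_sq_norm {y : Ω → E} (hy : MemLp y 2 P) :
    Integrable (fun ω => ‖y ω‖ ^ 2) P :=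
  (memLp_two_iff_integrable_sq_norm hy.1).1 hy

theorem memLp_of_eq_sub_smul [NormedSpace ℝ E] {p : ENNReal} {x g : ℕ → Ω → E} {γ : ℝ} {K : ℕ}
    (h0 : MemLp (x 0) p P) (hg : ∀ k < K, MemLp (g k) p P)
    (hupd : ∀ k < K, ∀ ω, x (k + 1) ω = x k ω - γ • g k ω) : ∀ k ≤ K, MemLp (x k) p P := by
  intro k
  induction k with
  | zero => exact fun _ => h0
  | succ k ih =>
    intro hk
    rw [show x (k + 1) = x k - γ • g k from funext (hupd k hk)]
    exact (ih (by omega)).sub ((hg k hk).const_smul γ)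

variable [InnerProductSpace ℝ E]

theorem MeasureTheory.MemLp.integrable_inner {y w : Ω → E} (hy : MemLp y 2 P)
    (hw : MemLp w 2 P) : Integrable (fun ω => ⟪y ω, w ω⟫_ℝ) P :=
  memLp_one_iff_integrable.1 ((innerSL ℝ).memLp_of_bilin 1 hy hw)

theorem abs_integral_inner_le {y w : Ω → E} (hy : MemLp y 2 P) (hw : MemLp w 2 P) :
    |∫ ω, ⟪y ω, w ω⟫_ℝ ∂P| ≤ √(∫ ω, ‖y ω‖ ^ 2 ∂P) * √(∫ ω, ‖w ω‖ ^ 2 ∂P) := by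
  have hinner : ∀ {u v : Ω → E} (hu : MemLp u 2 P) (hv : MemLp v 2 P),
      ⟪hu.toLp, hv.toLp⟫_ℝ = ∫ ω, ⟪u ω, v ω⟫_ℝ ∂P := fun hu hv => by
    rw [L2.inner_def]
    refine integral_congr_ae ?_
    filter_upwards [hu.coeFn_toLp, hv.coeFn_toLp] with ω hu' hv'
    rw [hu', hv']
  have hnorm : ∀ {u : Ω → E} (hu : MemLp u 2 P), ‖hu.toLp‖ = √(∫ ω, ‖u ω‖ ^ 2 ∂P) := fun hu => by
    rw [norm_eq_sqrt_real_inner, hinner hu hu]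
    simp_rw [real_inner_self_eq_norm_sq]
  rw [← hinner hy hw, ← hnorm hy, ← hnorm hw]
  exact abs_real_inner_le_norm _ _

theorem integral_norm_sub_smul_sq {y g : Ω → E} (hy : MemLp y 2 P) (hg : MemLp g 2 P) (γ : ℝ) :
    ∫ ω, ‖y ω - γ • g ω‖ ^ 2 ∂P
      = ∫ ω, ‖y ω‖ ^ 2 ∂P - 2 * γ * ∫ ω, ⟪y ω, g ω⟫_ℝ ∂P + γ ^ 2 * ∫ ω, ‖g ω‖ ^ 2 ∂P := by
  have hexpand : ∀ ω, ‖y ω - γ • g ω‖ ^ 2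
      = ‖y ω‖ ^ 2 - 2 * γ * ⟪y ω, g ω⟫_ℝ + γ ^ 2 * ‖g ω‖ ^ 2 := fun ω => by
    rw [norm_sub_sq_real, real_inner_smul_right, norm_smul, mul_pow, Real.norm_eq_abs, sq_abs]
    ring
  simp_rw [hexpand]
  rw [integral_add, integral_sub, integral_const_mul, integral_const_mul]
  · exact hy.integrable_sq_norm
  · exact (hy.integrable_inner hg).const_mul _
  · exact hy.integrable_sq_norm.sub ((hy.integrable_inner hg).const_mul _)
  · exact hg.integrable_sq_norm.const_mul _

variable [IsFiniteMeasure P]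

theorem integral_le_integral_of_ae_condExp_le (hm : m ≤ m0) {g b : Ω → ℝ}
    (hb : Integrable b P) (h : ∀ᵐ ω ∂P, (P[g|m]) ω ≤ b ω) :
    ∫ ω, g ω ∂P ≤ ∫ ω, b ω ∂P := by
  rw [← integral_condExp hm]
  exact integral_mono_ae integrable_condExp hb h

theorem integral_inner_condExp [CompleteSpace E] (hm : m ≤ m0) {y u : Ω → E}
    (hy : StronglyMeasurable[m] y) (hyu : Integrable (fun ω => ⟪y ω, u ω⟫_ℝ) P)
    (hu : Integrable u P) :
    ∫ ω, ⟪y ω, (P[u|m]) ω⟫_ℝ ∂P = ∫ ω, ⟪y ω, u ω⟫_ℝ ∂P := by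
  rw [← integral_condExp hm (f := fun ω => ⟪y ω, u ω⟫_ℝ)]
  exact integral_congr_ae (condExp_bilin_of_stronglyMeasurable_left (innerSL ℝ) hy hyu hu).symm

theorem integral_norm_sub_smul_sq_le [CompleteSpace E] (hm : m ≤ m0) {y ghat gbar h : Ω → E}
    {γ V B : ℝ} (hγ : 0 ≤ γ) (hy : StronglyMeasurable[m] y) (hyL2 : MemLp y 2 P)
    (hghat : MemLp ghat 2 P) (hgbar : MemLp gbar 2 P) (hmean : P[gbar|m] =ᵐ[P] h)
    (hdev : ∫ ω, ‖ghat ω - gbar ω‖ ^ 2 ∂P ≤ V)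
    (hsec : ∫ ω, ‖ghat ω‖ ^ 2 ∂P ≤ B + 2 * ∫ ω, ‖h ω‖ ^ 2 ∂P)
    (hdesc : γ * ∫ ω, ‖h ω‖ ^ 2 ∂P ≤ ∫ ω, ⟪y ω, h ω⟫_ℝ ∂P) :
    ∫ ω, ‖y ω - γ • ghat ω‖ ^ 2 ∂P
      ≤ ∫ ω, ‖y ω‖ ^ 2 ∂P + 2 * γ * √V * √(∫ ω, ‖y ω‖ ^ 2 ∂P) + γ ^ 2 * B := by
  have hunbiased : ∫ ω, ⟪y ω, gbar ω⟫_ℝ ∂P = ∫ ω, ⟪y ω, h ω⟫_ℝ ∂P := by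
    rw [← integral_inner_condExp hm hy (hyL2.integrable_inner hgbar) (hgbar.integrable one_le_two)]
    exact integral_congr_ae (hmean.mono fun ω hω => congrArg (inner ℝ (y ω)) hω)
  have hcross : ∫ ω, ⟪y ω, ghat ω⟫_ℝ ∂P
      = ∫ ω, ⟪y ω, ghat ω - gbar ω⟫_ℝ ∂P + ∫ ω, ⟪y ω, h ω⟫_ℝ ∂P := by
    rw [← hunbiased, ← integral_add (f := fun ω => ⟪y ω, ghat ω - gbar ω⟫_ℝ)
      (hyL2.integrable_inner (hghat.sub hgbar)) (hyL2.integrable_inner hgbar)]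
    simp_rw [← inner_add_right, sub_add_cancel]
  have hbias : -(√(∫ ω, ‖y ω‖ ^ 2 ∂P) * √V) ≤ ∫ ω, ⟪y ω, ghat ω - gbar ω⟫_ℝ ∂P := by
    refine neg_le_of_abs_le ((abs_integral_inner_le hyL2 (hghat.sub hgbar)).trans ?_)
    exact mul_le_mul_of_nonneg_left (Real.sqrt_le_sqrt hdev) (Real.sqrt_nonneg _)
  rw [integral_norm_sub_smul_sq hyL2 hghat, hcross]
  nlinarith [mul_le_mul_of_nonneg_left hbias hγ, mul_le_mul_of_nonneg_left hdesc hγ,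
    mul_le_mul_of_nonneg_left hsec (sq_nonneg γ)]

end Expectation

theorem le_two_mul_sq_of_le_add_mul_sqrt_add {D b c : ℕ → ℝ} {R : ℝ} {K : ℕ} (hR : 0 ≤ R)
    (hb : ∀ k < K, 0 ≤ b k) (hc : ∀ k < K, 0 ≤ c k) (h0 : D 0 ≤ R ^ 2)
    (hstep : ∀ k < K, D (k + 1) ≤ D k + b k * √(D k) + c k)
    (hsum : √2 * R * ∑ k ∈ Finset.range K, b k + ∑ k ∈ Finset.range K, c k ≤ R ^ 2) :
    ∀ k ≤ K, D k ≤ 2 * R ^ 2 := by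
  set S : ℕ → ℝ := fun k => R ^ 2 + ∑ j ∈ Finset.range k, (√2 * R * b j + c j)
  have hS : ∀ k ≤ K, S k ≤ 2 * R ^ 2 := fun k hk => by
    have hmono : ∑ j ∈ Finset.range k, (√2 * R * b j + c j)
        ≤ ∑ j ∈ Finset.range K, (√2 * R * b j + c j) :=
      Finset.sum_le_sum_of_subset_of_nonneg (Finset.range_subset_range.2 hk) fun j hj _ => by
        have := hb j (Finset.mem_range.1 hj)
        have := hc j (Finset.mem_range.1 hj)
        positivity
    rw [Finset.mul_sum, ← Finset.sum_add_distrib] at hsum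
    simp only [S]
    linarith
  have hDS : ∀ k ≤ K, D k ≤ S k := by
    intro k
    induction k with
    | zero => simpa [S] using h0
    | succ k ih =>
      intro hk
      have hDk := ih (by omega)
      have hsqrt : √(D k) ≤ √2 * R := by
        rw [← Real.sqrt_sq hR, ← Real.sqrt_mul zero_le_two]
        exact Real.sqrt_le_sqrt (hDk.trans (hS k (by omega)))
      simp only [S, Finset.sum_range_succ] at hDk ⊢
      nlinarith [hstep k hk, mul_le_mul_of_nonneg_left hsqrt (hb k hk)]
  exact fun k hk => (hDS k hk).trans (hS k hk)

section BTARD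

variable {Ω E : Type*} {m m0 : MeasurableSpace Ω} {P : Measure Ω} [IsProbabilityMeasure P]
  [NormedAddCommGroup E] [InnerProductSpace ℝ E] [CompleteSpace E]
  {f : E → ℝ} {L : ℝ} {xstar : E}

theorem btard_sgd_step (hm : m ≤ m0) (hL : 0 < L) (hdiff : Differentiable ℝ f)
    (hsmooth : ∀ y z, ‖gradient f y - gradient f z‖ ≤ L * ‖y - z‖)
    (hconv : ConvexOn ℝ Set.univ f) (hmin : ∀ y, f xstar ≤ f y)
    {γ C σ : ℝ} {N : ℕ} (hγ : 0 < γ) (hγL : γ ≤ 1 / (4 * L)) (hC : 0 ≤ C) (hσ : 0 ≤ σ)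
    {x ghat gbar : Ω → E} {δ : Ω → ℝ}
    (hx : StronglyMeasurable[m] x) (hxL2 : MemLp (fun ω => x ω - xstar) 2 P)
    (hδ : Integrable δ P) (hghat : MemLp ghat 2 P) (hgbar : Integrable gbar P)
    (hdevint : Integrable (fun ω => ‖ghat ω - gbar ω‖ ^ 2) P)
    (hgradint : Integrable (fun ω => ‖gradient f (x ω)‖ ^ 2) P)
    (hmean : P[gbar|m] =ᵐ[P] fun ω => gradient f (x ω))
    (hdev : ∀ᵐ ω ∂P, (P[fun ω' => ‖ghat ω' - gbar ω'‖ ^ 2|m]) ω ≤ C * δ ω * σ ^ 2)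
    (hsec : ∀ᵐ ω ∂P, (P[fun ω' => ‖ghat ω'‖ ^ 2|m]) ω
        ≤ 2 * C * δ ω * σ ^ 2 + 2 * ‖gradient f (x ω)‖ ^ 2 + 2 * σ ^ 2 / N) :
    ∫ ω, ‖x ω - γ • ghat ω - xstar‖ ^ 2 ∂P
      ≤ ∫ ω, ‖x ω - xstar‖ ^ 2 ∂P
        + 2 * γ * (√C * σ * √(∫ ω, δ ω ∂P)) * √(∫ ω, ‖x ω - xstar‖ ^ 2 ∂P)
        + (2 * γ ^ 2 * C * σ ^ 2 * ∫ ω, δ ω ∂P + 2 * γ ^ 2 * σ ^ 2 / N) := by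
  have hdevL2 : MemLp (ghat - gbar) 2 P :=
    (memLp_two_iff_integrable_sq_norm (hghat.1.sub hgbar.1)).2 hdevint
  have hgbarL2 : MemLp gbar 2 P := by simpa using hghat.sub hdevL2
  have hgradm : StronglyMeasurable[m] fun ω => gradient f (x ω) :=
    (continuous_gradient_of_lipschitz hsmooth).comp_stronglyMeasurable hx
  have hgradL2 : MemLp (fun ω => gradient f (x ω)) 2 P :=
    (memLp_two_iff_integrable_sq_norm (hgradm.mono hm).aestronglyMeasurable).2 hgradint
  have hdesc : γ * ∫ ω, ‖gradient f (x ω)‖ ^ 2 ∂P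
      ≤ ∫ ω, ⟪x ω - xstar, gradient f (x ω)⟫_ℝ ∂P := by
    rw [← integral_const_mul]
    refine integral_mono (hgradint.const_mul γ) (hxL2.integrable_inner hgradL2) fun ω => ?_
    have hγL' : γ * (4 * L) ≤ 1 := (le_div_iff₀ (by positivity)).1 hγL
    have := hconv.sq_norm_gradient_le_inner hL hdiff hsmooth hmin (x ω)
    rw [real_inner_comm]
    nlinarith [sq_nonneg ‖gradient f (x ω)‖]
  have hV : ∫ ω, ‖ghat ω - gbar ω‖ ^ 2 ∂P ≤ C * σ ^ 2 * ∫ ω, δ ω ∂P := by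
    refine (integral_le_integral_of_ae_condExp_le hm ((hδ.const_mul C).mul_const _)
      hdev).trans_eq ?_
    rw [integral_mul_const, integral_const_mul]
    ring
  have hB : ∫ ω, ‖ghat ω‖ ^ 2 ∂P
      ≤ (2 * C * σ ^ 2 * ∫ ω, δ ω ∂P + 2 * σ ^ 2 / N) + 2 * ∫ ω, ‖gradient f (x ω)‖ ^ 2 ∂P := by
    have hδ' : Integrable (fun ω => 2 * C * δ ω * σ ^ 2) P := (hδ.const_mul _).mul_const _
    have hgrad' : Integrable (fun ω => 2 * ‖gradient f (x ω)‖ ^ 2) P := hgradint.const_mul _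
    refine (integral_le_integral_of_ae_condExp_le hm (b := fun ω =>
      2 * C * δ ω * σ ^ 2 + 2 * ‖gradient f (x ω)‖ ^ 2 + 2 * σ ^ 2 / N)
      ((hδ'.add hgrad').add (integrable_const (2 * σ ^ 2 / N))) hsec).trans_eq ?_
    rw [integral_add (f := fun ω => 2 * C * δ ω * σ ^ 2 + 2 * ‖gradient f (x ω)‖ ^ 2)
        (hδ'.add hgrad') (integrable_const _), integral_add hδ' hgrad',
      integral_mul_const, integral_const_mul, integral_const_mul, integral_const, probReal_univ,
      one_smul]
    ring
  have hstep := integral_norm_sub_smul_sq_le (y := fun ω => x ω - xstar) hm hγ.le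
    (hx.sub stronglyMeasurable_const) hxL2 hghat hgbarL2 hmean hV hB hdesc
  rw [Real.sqrt_mul (by positivity), Real.sqrt_mul hC, Real.sqrt_sq hσ] at hstep
  simp_rw [sub_right_comm _ _ xstar]
  exact hstep.trans_eq (by ring)

end BTARD

theorem btard_sgd_convex_iterates_bounded_general
    {Ω : Type*} {m0 : MeasurableSpace Ω} (P : Measure Ω) [IsProbabilityMeasure P]
    (ℱ : Filtration ℕ m0) {d : ℕ}
    (f : EuclideanSpace ℝ (Fin d) → ℝ) (L : ℝ) (hL : 0 < L)
    (hdiff : Differentiable ℝ f)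
    (hsmooth : ∀ y z, ‖gradient f y - gradient f z‖ ≤ L * ‖y - z‖)
    (hconv : ConvexOn ℝ Set.univ f)
    (xstar : EuclideanSpace ℝ (Fin d)) (hmin : ∀ y, f xstar ≤ f y)
    (K N : ℕ)
    (γ C σ R₀ : ℝ) (hγ : 0 < γ) (hγL : γ ≤ 1 / (4 * L)) (hC : 0 ≤ C) (hσ : 0 ≤ σ)
    (x0 : EuclideanSpace ℝ (Fin d)) (hR₀ : ‖x0 - xstar‖ ≤ R₀)
    (x ghat gbar : ℕ → Ω → EuclideanSpace ℝ (Fin d)) (δhat : ℕ → Ω → ℝ)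
    (hx0 : x 0 = fun _ => x0)
    (hxmeas : ∀ k < K, StronglyMeasurable[ℱ k] (x k))
    (hδnonneg : ∀ k < K, ∀ ω, 0 ≤ δhat k ω)
    (hδint : ∀ k < K, Integrable (δhat k) P)
    (hgbarint : ∀ k < K, Integrable (gbar k) P)
    (hghatint : ∀ k < K, Integrable (ghat k) P)
    (hdevint : ∀ k < K, Integrable (fun ω => ‖ghat k ω - gbar k ω‖ ^ 2) P)
    (hsecint : ∀ k < K, Integrable (fun ω => ‖ghat k ω‖ ^ 2) P)
    (hgradint : ∀ k < K, Integrable (fun ω => ‖gradient f (x k ω)‖ ^ 2) P)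
    (hmean : ∀ k < K, P[gbar k|ℱ k] =ᵐ[P] fun ω => gradient f (x k ω))
    (hdev : ∀ k < K, ∀ᵐ ω ∂P,
      (P[fun ω' => ‖ghat k ω' - gbar k ω'‖ ^ 2|ℱ k]) ω ≤ C * δhat k ω * σ ^ 2)
    (hsec : ∀ k < K, ∀ᵐ ω ∂P,
      (P[fun ω' => ‖ghat k ω'‖ ^ 2|ℱ k]) ω
        ≤ 2 * C * δhat k ω * σ ^ 2 + 2 * ‖gradient f (x k ω)‖ ^ 2 + 2 * σ ^ 2 / N)
    (hupd : ∀ k < K, ∀ ω, x (k + 1) ω = x k ω - γ • ghat k ω)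
    (hcond1 : 2 * γ ^ 2 * σ ^ 2 * K / N ≤ R₀ ^ 2 / 3)
    (hcond2 : 2 * Real.sqrt 2 * γ * Real.sqrt C * σ * R₀ *
        ∑ k ∈ Finset.range K, Real.sqrt (∫ ω, δhat k ω ∂P) ≤ R₀ ^ 2 / 3)
    (hcond3 : 2 * γ ^ 2 * C * σ ^ 2 *
        ∑ k ∈ Finset.range K, (∫ ω, δhat k ω ∂P) ≤ R₀ ^ 2 / 3) :
    ∀ k ≤ K, ∫ ω, ‖x k ω - xstar‖ ^ 2 ∂P ≤ 2 * R₀ ^ 2 := by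
  have hR₀' : 0 ≤ R₀ := (norm_nonneg _).trans hR₀
  have hghatL2 : ∀ k < K, MemLp (ghat k) 2 P := fun k hk =>
    (memLp_two_iff_integrable_sq_norm (hghatint k hk).1).2 (hsecint k hk)
  have hxL2 : ∀ k ≤ K, MemLp (fun ω => x k ω - xstar) 2 P := fun k hk =>
    (memLp_of_eq_sub_smul (hx0 ▸ memLp_const x0) hghatL2 hupd k hk).sub (memLp_const xstar)
  have hδ : ∀ k < K, 0 ≤ ∫ ω, δhat k ω ∂P := fun k hk => integral_nonneg (hδnonneg k hk)
  refine le_two_mul_sq_of_le_add_mul_sqrt_add hR₀'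
    (b := fun k => 2 * γ * (√C * σ * √(∫ ω, δhat k ω ∂P)))
    (c := fun k => 2 * γ ^ 2 * C * σ ^ 2 * ∫ ω, δhat k ω ∂P + 2 * γ ^ 2 * σ ^ 2 / N)
    (fun k _ => by positivity) (fun k hk => by have := hδ k hk; positivity) ?_ (fun k hk => ?_) ?_
  · simpa [hx0] using pow_le_pow_left₀ (norm_nonneg _) hR₀ 2
  · simpa only [hupd k hk] using btard_sgd_step (ℱ.le k) hL hdiff hsmooth hconv hmin hγ hγL hC hσ
      (hxmeas k hk) (hxL2 k hk.le) (hδint k hk) (hghatL2 k hk) (hgbarint k hk) (hdevint k hk)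
      (hgradint k hk) (hmean k hk) (hdev k hk) (hsec k hk)
  · simp only [Finset.sum_add_distrib, ← Finset.mul_sum, Finset.sum_const, Finset.card_range,
      nsmul_eq_mul]
    linear_combination hcond1 + hcond2 + hcond3

/-- Under the hypotheses of the convex BTARD-SGD analysis, the iterates
remain bounded in expectation: `E[‖x^k − x*‖²] ≤ 2R₀²` for every `k = 0, 1, …, K`. -/
theorem btard_sgd_convex_iterates_bounded
    {Ω : Type*} {m0 : MeasurableSpace Ω} (P : Measure Ω) [IsProbabilityMeasure P]
    (ℱ : Filtration ℕ m0) {d : ℕ}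
    (f : EuclideanSpace ℝ (Fin d) → ℝ) (L : ℝ) (hL : 0 < L)
    (hdiff : Differentiable ℝ f)
    (hsmooth : ∀ y z, ‖gradient f y - gradient f z‖ ≤ L * ‖y - z‖)
    (hconv : ConvexOn ℝ Set.univ f)
    (xstar : EuclideanSpace ℝ (Fin d)) (hmin : ∀ y, f xstar ≤ f y)
    (K N : ℕ) (hK : 0 < K) (hN : 1 ≤ N)
    (γ C σ R₀ : ℝ) (hγ : 0 < γ) (hγL : γ ≤ 1 / (4 * L)) (hC : 0 ≤ C) (hσ : 0 ≤ σ)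
    (x0 : EuclideanSpace ℝ (Fin d)) (hR₀ : ‖x0 - xstar‖ ≤ R₀)
    (x ghat gbar : ℕ → Ω → EuclideanSpace ℝ (Fin d)) (δhat : ℕ → Ω → ℝ)
    (hx0 : x 0 = fun _ => x0)
    (hxmeas : ∀ k < K, StronglyMeasurable[ℱ k] (x k))
    (hδmeas : ∀ k < K, StronglyMeasurable[ℱ k] (δhat k))
    (hδnonneg : ∀ k < K, ∀ ω, 0 ≤ δhat k ω)
    (hδint : ∀ k < K, Integrable (δhat k) P)
    (hgbarint : ∀ k < K, Integrable (gbar k) P)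
    (hghatint : ∀ k < K, Integrable (ghat k) P)
    (hdevint : ∀ k < K, Integrable (fun ω => ‖ghat k ω - gbar k ω‖ ^ 2) P)
    (hsecint : ∀ k < K, Integrable (fun ω => ‖ghat k ω‖ ^ 2) P)
    (hfint : ∀ k < K, Integrable (fun ω => f (x k ω)) P)
    (hgradint : ∀ k < K, Integrable (fun ω => ‖gradient f (x k ω)‖ ^ 2) P)
    (hmean : ∀ k < K, P[gbar k|ℱ k] =ᵐ[P] fun ω => gradient f (x k ω))
    (hdev : ∀ k < K, ∀ᵐ ω ∂P,
      (P[fun ω' => ‖ghat k ω' - gbar k ω'‖ ^ 2|ℱ k]) ω ≤ C * δhat k ω * σ ^ 2)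
    (hsec : ∀ k < K, ∀ᵐ ω ∂P,
      (P[fun ω' => ‖ghat k ω'‖ ^ 2|ℱ k]) ω
        ≤ 2 * C * δhat k ω * σ ^ 2 + 2 * ‖gradient f (x k ω)‖ ^ 2 + 2 * σ ^ 2 / N)
    (hupd : ∀ k < K, ∀ ω, x (k + 1) ω = x k ω - γ • ghat k ω)
    (hcond1 : 2 * γ ^ 2 * σ ^ 2 * K / N ≤ R₀ ^ 2 / 3)
    (hcond2 : 2 * Real.sqrt 2 * γ * Real.sqrt C * σ * R₀ *
        ∑ k ∈ Finset.range K, Real.sqrt (∫ ω, δhat k ω ∂P) ≤ R₀ ^ 2 / 3)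
    (hcond3 : 2 * γ ^ 2 * C * σ ^ 2 *
        ∑ k ∈ Finset.range K, (∫ ω, δhat k ω ∂P) ≤ R₀ ^ 2 / 3) :
    ∀ k ≤ K, ∫ ω, ‖x k ω - xstar‖ ^ 2 ∂P ≤ 2 * R₀ ^ 2 :=
  btard_sgd_convex_iterates_bounded_general P ℱ f L hL hdiff hsmooth hconv xstar hmin K N γ C σ R₀
    hγ hγL hC hσ x0 hR₀ x ghat gbar δhat hx0 hxmeas hδnonneg hδint hgbarint hghatint hdevint hsecint
    hgradint hmean hdev hsec hupd hcond1 hcond2 hcond3
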